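/- Let X and N be independent real random variables, X distributed as the centered Gaussian law G(0, σ_X²) with σ_X > 0, and N distributed as the Gaussian mixture Σ_{l=0}^L β_l·G(0, σ_{N,l}²) with weights β_l ≥ 0 summing to 1 and σ_{N,l} > 0. Let g : ℝ → ℝ be continuously differentiable such that g(X+N)·X is integrable, g′ is integrable with respect to each G(0, σ_X² + σ_{N,l}²), and y ↦ g(y)·exp(−y²/(2(σ_X² + σ_{N,l}²))) tends to 0 as y → ±∞ for each l. Then E[X·g(X + N)] = σ_X²·Σ_{l=0}^L β_l·∫ g′(y) dG(0, σ_X² + σ_{N,l}²)(y). -/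

import Mathlib

/-!
By independence the law of `(N, X)` is `ν ⊗ G(0, vX)`, where `ν` is the law of `N`. For each
fixed `n`, Gaussian integration by parts (Stein's lemma) gives
`E[X g(n + X)] = vX · E[g'(n + X)]`; integrating over `n` turns the right-hand side into
`vX · ∫ g' d(ν ∗ G(0, vX))`, and convolving the mixture `ν` with `G(0, vX)` adds `vX` to the
variance of every component.
-/

open MeasureTheory ProbabilityTheory Filter
open scoped NNReal

theorem MeasureTheory.Measure.finsetSum_conv {M ι : Type*} [AddMonoid M] [MeasurableSpace M]
    [MeasurableAdd₂ M] (s : Finset ι) (μ : ι → Measure M) [∀ i, IsFiniteMeasure (μ i)]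
    (ν : Measure M) [SFinite ν] :
    (∑ i ∈ s, μ i) ∗ ν = ∑ i ∈ s, μ i ∗ ν := by
  classical
  induction s using Finset.induction_on with
  | empty => simp [Measure.zero_conv]
  | insert a s ha ih => rw [Finset.sum_insert ha, Measure.add_conv, ih, Finset.sum_insert ha]

theorem finsetSum_smul_gaussianReal_conv_gaussianReal {ι : Type*} (s : Finset ι)
    (β : ι → ℝ≥0) (m : ι → ℝ) (v : ι → ℝ≥0) (m' : ℝ) (w : ℝ≥0) :
    (∑ i ∈ s, β i • gaussianReal (m i) (v i)) ∗ gaussianReal m' w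
      = ∑ i ∈ s, β i • gaussianReal (m i + m') (v i + w) := by
  rw [Measure.finsetSum_conv]
  refine Finset.sum_congr rfl fun i _ => ?_
  rw [← Measure.coe_nnreal_smul, Measure.conv_smul_left, gaussianReal_conv_gaussianReal,
    Measure.coe_nnreal_smul]

theorem Continuous.integrable_of_integrable_id_mul {μ : Measure ℝ} [IsFiniteMeasure μ]
    {f : ℝ → ℝ} (hf : Continuous f) (hxf : Integrable (fun x => x * f x) μ) :
    Integrable f μ := by
  obtain ⟨C, hC⟩ := (isCompact_Icc (a := -1) (b := 1)).exists_bound_of_continuousOn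
    hf.continuousOn
  refine (hxf.norm.add (integrable_const C)).mono' hf.aestronglyMeasurable
    (ae_of_all _ fun x => ?_)
  show ‖f x‖ ≤ ‖x * f x‖ + C
  rcases le_or_gt |x| 1 with hx | hx
  · have := hC x (abs_le.1 hx)
    have := norm_nonneg (x * f x)
    linarith
  · have : ‖f x‖ ≤ ‖x * f x‖ := by
      rw [norm_mul]; exact le_mul_of_one_le_left (norm_nonneg _) hx.le
    have := hC 0 (by norm_num)
    have := norm_nonneg (f 0)
    linarith

theorem integrable_gaussianReal_iff {E : Type*} [NormedAddCommGroup E] [NormedSpace ℝ E]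
    {m : ℝ} {v : ℝ≥0} (hv : v ≠ 0) {f : ℝ → E} :
    Integrable f (gaussianReal m v) ↔ Integrable (fun x => gaussianPDFReal m v x • f x) := by
  rw [gaussianReal_of_var_ne_zero m hv, integrable_withDensity_iff_integrable_smul'
    (measurable_gaussianPDF m v) (ae_of_all _ fun _ => gaussianPDF_lt_top)]
  simp

theorem hasDerivAt_gaussianPDFReal (m : ℝ) (v : ℝ≥0) (x : ℝ) :
    HasDerivAt (gaussianPDFReal m v) (-((x - m) / v) * gaussianPDFReal m v x) x := by
  have hexp : HasDerivAt (fun y => -(y - m) ^ 2 / (2 * v)) (-((x - m) / v)) x :=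
    ((((hasDerivAt_id x).sub_const m).pow 2).neg.div_const (2 * (v : ℝ))).congr_deriv
      (by simp only [id]; ring)
  rw [gaussianPDFReal_def]
  exact (hexp.exp.const_mul _).congr_deriv (by ring)

theorem integral_mul_gaussianReal_eq_mul_integral_deriv {v : ℝ≥0} {f : ℝ → ℝ}
    (hf : Differentiable ℝ f) (hxf : Integrable (fun x => x * f x) (gaussianReal 0 v))
    (hf' : Integrable (deriv f) (gaussianReal 0 v)) :
    ∫ x, x * f x ∂gaussianReal 0 v = v * ∫ x, deriv f x ∂gaussianReal 0 v := by
  rcases eq_or_ne v 0 with rfl | hv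
  · simp
  -- Integrability of `f` against the density makes the boundary terms of the integration by parts
  -- vanish.
  have hfG : Integrable f (gaussianReal 0 v) := hf.continuous.integrable_of_integrable_id_mul hxf
  rw [integrable_gaussianReal_iff hv] at hxf hf' hfG
  simp only [integral_gaussianReal_eq_integral_smul hv, smul_eq_mul] at hxf hf' hfG ⊢
  have hparts := integral_mul_deriv_eq_deriv_mul_of_integrable (u := f)
    (u' := deriv f) (fun x _ => (hf x).hasDerivAt)
    (fun x _ => hasDerivAt_gaussianPDFReal 0 v x) ?_ ?_ ?_
  · have hv' : (v : ℝ) ≠ 0 := NNReal.coe_ne_zero.2 hv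
    have hleft : ∫ x, f x * (-((x - 0) / v) * gaussianPDFReal 0 v x)
        = -(v : ℝ)⁻¹ * ∫ x, gaussianPDFReal 0 v x * (x * f x) := by
      rw [← integral_const_mul]
      congr 1 with x
      ring
    have hscaled : (v : ℝ)⁻¹ * ∫ x, gaussianPDFReal 0 v x * (x * f x)
        = ∫ x, gaussianPDFReal 0 v x * deriv f x := by
      simp_rw [hleft, mul_comm (deriv f _)] at hparts
      linarith
    rw [← hscaled, mul_inv_cancel_left₀ hv']
  · refine (hxf.const_mul (-(v : ℝ)⁻¹)).congr (ae_of_all _ fun x => ?_)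
    simp only [Pi.mul_apply]
    ring
  · exact hf'.congr (ae_of_all _ fun x => mul_comm _ _)
  · exact hfG.congr (ae_of_all _ fun x => mul_comm _ _)

theorem integral_mul_comp_add_prod_gaussianReal (ν : Measure ℝ) [SFinite ν] (v : ℝ≥0)
    {g : ℝ → ℝ} (hg : Differentiable ℝ g)
    (hxg : Integrable (fun p : ℝ × ℝ => p.2 * g (p.1 + p.2)) (ν.prod (gaussianReal 0 v)))
    (hg' : Integrable (deriv g) (ν ∗ gaussianReal 0 v)) :
    ∫ p, p.2 * g (p.1 + p.2) ∂ν.prod (gaussianReal 0 v)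
      = v * ∫ y, deriv g y ∂(ν ∗ gaussianReal 0 v) := by
  rw [integral_prod _ hxg, integral_conv hg', ← integral_const_mul]
  refine integral_congr_ae ?_
  filter_upwards [hxg.prod_right_ae, ((integrable_conv_iff hg'.1).1 hg').1] with n hxgn hg'n
  have hderiv : deriv (fun x => g (n + x)) = fun x => deriv g (n + x) :=
    funext (deriv_comp_const_add g n)
  have hstein := integral_mul_gaussianReal_eq_mul_integral_deriv (f := fun x => g (n + x))
    (by fun_prop) hxgn (by rwa [hderiv])
  rwa [hderiv] at hstein

theorem mixture_stein_identity_general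
    {Ω : Type*} {mΩ : MeasurableSpace Ω} (μ : Measure Ω) [IsProbabilityMeasure μ]
    (X N : Ω → ℝ) (hXmeas : Measurable X) (hNmeas : Measurable N)
    (hindep : IndepFun X N μ)
    (vX : NNReal)
    (L : ℕ) (β : ℕ → NNReal)
    (vN : ℕ → NNReal)
    (hX : μ.map X = gaussianReal 0 vX)
    (hN : μ.map N = ∑ l ∈ Finset.range (L + 1), β l • gaussianReal 0 (vN l))
    (g : ℝ → ℝ) (hg : ContDiff ℝ 1 g)
    (hgX : Integrable (fun ω => g (X ω + N ω) * X ω) μ)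
    (hg' : ∀ l ∈ Finset.range (L + 1),
      Integrable (deriv g) (gaussianReal 0 (vX + vN l))) :
    (∫ ω, X ω * g (X ω + N ω) ∂μ)
      = (vX : ℝ) * ∑ l ∈ Finset.range (L + 1),
          (β l : ℝ) * ∫ y, deriv g y ∂(gaussianReal 0 (vX + vN l)) := by
  have hlaw : μ.map (fun ω => (N ω, X ω)) = (μ.map N).prod (gaussianReal 0 vX) := by
    rw [← hX]
    exact (indepFun_iff_map_prod_eq_prod_map_map hNmeas.aemeasurable
      hXmeas.aemeasurable).1 hindep.symm
  have hconv : μ.map N ∗ gaussianReal 0 vX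
      = ∑ l ∈ Finset.range (L + 1), β l • gaussianReal 0 (vX + vN l) := by
    simp_rw [hN, finsetSum_smul_gaussianReal_conv_gaussianReal, add_zero, add_comm (vN _)]
  have hmix : ∀ l ∈ Finset.range (L + 1),
      Integrable (deriv g) (β l • gaussianReal 0 (vX + vN l)) :=
    fun l hl => (hg' l hl).smul_measure_nnreal
  have hxg : Integrable (fun p : ℝ × ℝ => p.2 * g (p.1 + p.2))
      ((μ.map N).prod (gaussianReal 0 vX)) := by
    rw [← hlaw, integrable_map_measure (by fun_prop) (by fun_prop)]
    simpa [Function.comp_def, add_comm, mul_comm] using hgX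
  calc ∫ ω, X ω * g (X ω + N ω) ∂μ
      = ∫ p, p.2 * g (p.1 + p.2) ∂(μ.map N).prod (gaussianReal 0 vX) := by
        rw [← hlaw, integral_map (by fun_prop) (by fun_prop)]
        simp_rw [add_comm (X _)]
    _ = vX * ∫ y, deriv g y ∂(μ.map N ∗ gaussianReal 0 vX) :=
        integral_mul_comp_add_prod_gaussianReal _ _ (hg.differentiable one_ne_zero) hxg
          (by rw [hconv]; exact integrable_finsetSum_measure.2 hmix)
    _ = _ := by
        rw [hconv, integral_finsetSum_measure hmix]
        simp_rw [integral_smul_nnreal_measure, NNReal.smul_def, smul_eq_mul]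

/-- Stein-type identity for Gaussian-mixture noise: if `X ~ G(0, vX)` and `N` is
an independent zero-mean Gaussian mixture, then for a C¹ nonlinearity `g` with
vanishing Gaussian tails, `E[X·g(X+N)] = vX·Σ_l β_l·∫ g′ dG(0, vX + vN_l)`. -/
theorem mixture_stein_identity
    {Ω : Type*} {mΩ : MeasurableSpace Ω} (μ : Measure Ω) [IsProbabilityMeasure μ]
    (X N : Ω → ℝ) (hXmeas : Measurable X) (hNmeas : Measurable N)
    (hindep : IndepFun X N μ)
    (vX : NNReal) (hvX : 0 < vX)
    (L : ℕ) (β : ℕ → NNReal) (hβ : ∑ l ∈ Finset.range (L + 1), β l = 1)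
    (vN : ℕ → NNReal) (hvN : ∀ l ∈ Finset.range (L + 1), 0 < vN l)
    (hX : μ.map X = gaussianReal 0 vX)
    (hN : μ.map N = ∑ l ∈ Finset.range (L + 1), β l • gaussianReal 0 (vN l))
    (g : ℝ → ℝ) (hg : ContDiff ℝ 1 g)
    (hgX : Integrable (fun ω => g (X ω + N ω) * X ω) μ)
    (hg' : ∀ l ∈ Finset.range (L + 1),
      Integrable (deriv g) (gaussianReal 0 (vX + vN l)))
    (htail : ∀ l ∈ Finset.range (L + 1),
      Tendsto (fun y => g y * Real.exp (-(y ^ 2) / (2 * ((vX : ℝ) + (vN l : ℝ)))))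
        atTop (nhds 0)
      ∧ Tendsto (fun y => g y * Real.exp (-(y ^ 2) / (2 * ((vX : ℝ) + (vN l : ℝ)))))
        atBot (nhds 0)) :
    (∫ ω, X ω * g (X ω + N ω) ∂μ)
      = (vX : ℝ) * ∑ l ∈ Finset.range (L + 1),
          (β l : ℝ) * ∫ y, deriv g y ∂(gaussianReal 0 (vX + vN l)) :=
  mixture_stein_identity_general (mΩ := mΩ) μ X N hXmeas hNmeas hindep vX L β vN hX hN g hg hgX hg'
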